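/- The matrix D satisfies D² = I₅ and DᵀJD = J (so D lies in the orthogonal group of the form J), and conjugation by D fixes both x and h: D x D⁻¹ = x and D h D⁻¹ = h. -/

import Mathlib

noncomputable section

/-- The symmetric bilinear form matrix `J = E₁₁ + E₂₄ + E₄₂ + E₃₅ + E₅₃`. -/
def J5 : Matrix (Fin 5) (Fin 5) ℂ :=
  !![1,0,0,0,0; 0,0,0,1,0; 0,0,0,0,1; 0,1,0,0,0; 0,0,1,0,0]

/-- The subregular nilpotent `x` with nonzero entries `x₁₄ = 1, x₂₁ = −1, x₂₃ = 1, x₅₄ = −1`. -/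
def x5 : Matrix (Fin 5) (Fin 5) ℂ :=
  !![0,0,0,1,0; -1,0,1,0,0; 0,0,0,0,0; 0,0,0,0,0; 0,0,0,-1,0]

/-- The semisimple element `h = diag(0, 2, 0, −2, 0)`. -/
def h5 : Matrix (Fin 5) (Fin 5) ℂ :=
  !![0,0,0,0,0; 0,2,0,0,0; 0,0,0,0,0; 0,0,0,-2,0; 0,0,0,0,0]

/-- The matrix `D` generating `C(x,h) = Z_G(x) ∩ Z_G(h) ≅ ℤ/2ℤ`. -/
def D5 : Matrix (Fin 5) (Fin 5) ℂ :=
  !![1,0,0,0,2; 0,-1,0,0,0; 2,0,-1,0,2; 0,0,0,-1,0; 0,0,0,0,-1]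

/-! Since `D² = 1`, `D` is invertible, so `D M D⁻¹ = M` amounts to `D M = M D`; what is left are
entrywise checks of `5 × 5` matrix identities. -/

theorem Matrix.mul_mul_nonsing_inv_of_commute {n R : Type*} [Fintype n] [DecidableEq n]
    [CommRing R] {A M : Matrix n n R} (hA : IsUnit A.det) (h : Commute A M) :
    A * M * A⁻¹ = M := by
  rw [h.eq, Matrix.mul_nonsing_inv_cancel_right _ _ hA]

theorem D5_mul_self : D5 * D5 = 1 := by
  rw [← Matrix.ext_iff]
  simp [D5, Fin.forall_fin_succ, Matrix.one_apply]
  norm_num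

theorem transpose_D5_mul_J5_mul_D5 : D5.transpose * J5 * D5 = J5 := by
  rw [← Matrix.ext_iff]
  simp [D5, J5, Fin.forall_fin_succ, Matrix.mul_apply, Fin.sum_univ_five]
  norm_num

theorem commute_D5_x5 : Commute D5 x5 := by
  simp [Commute, SemiconjBy, D5, x5]
  norm_num

theorem commute_D5_h5 : Commute D5 h5 := by
  simp [Commute, SemiconjBy, D5, h5]

/-- `D` is an involution lying in the orthogonal group of the form `J`, and conjugation by `D`
fixes both `x` and `h`. -/
theorem D_involution_fixes_x_h :
    D5 * D5 = 1 ∧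
    D5.transpose * J5 * D5 = J5 ∧
    D5 * x5 * D5⁻¹ = x5 ∧
    D5 * h5 * D5⁻¹ = h5 := by
  have hD : IsUnit D5.det := Matrix.isUnit_det_of_left_inverse D5_mul_self
  exact ⟨D5_mul_self, transpose_D5_mul_J5_mul_D5,
    Matrix.mul_mul_nonsing_inv_of_commute hD commute_D5_x5,
    Matrix.mul_mul_nonsing_inv_of_commute hD commute_D5_h5⟩
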